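/- Fix 0 < μ < v̄. The supremum, over posted prices v₁ ∈ [0, v̄], of the competitive ratio inf_{F ∈ 𝓕_mean} v₁·F([v₁, v̄]) / OPT(F) of the deterministic posted-price mechanism over the mean ambiguity set equals 𝓡₁ = 1 − √(1 − μ/v̄), and it is attained at the price v₁ = v̄ − √(v̄² − μ·v̄). -/

import Mathlib

/-!
Posting `c = (1 - s) v̄`, where `s = √(1 - μ/v̄)`, guarantees ratio `1 - s`: a mean of at least
`μ` forces the sale probability `q = F [c, v̄]` to be at least `(μ - c)/(v̄ - c) = 1 - s`, while
`OPT(F) ≤ max c (v̄ q)`. Conversely, the two-point law on `{0, v̄}` with mean `μ` caps the ratio of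
any price `v₁` at `v₁/v̄`; for `c < v₁ ≤ μ` the law on `{a, v̄}` with mean `μ` and `a ↑ v₁` caps it
at `(μ - v₁)/(v̄ - v₁) ≤ 1 - s`, and for `v₁ > μ` the point mass at `μ` never sells.
-/

open MeasureTheory Set

noncomputable section

/-- Hindsight optimal revenue: `OPT(F) = sup_{p ∈ [0, v̄]} p · F([p, v̄])`. -/
def hindsightOpt (vbar : ℝ) (F : Measure ℝ) : ℝ :=
  ⨆ p : Icc (0 : ℝ) vbar, (p : ℝ) * (F (Icc (p : ℝ) vbar)).toReal

/-- The mean ambiguity set: probability measures on `[0, v̄]` with mean at least `μ`. -/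
def Fmean (μ vbar : ℝ) : Set (Measure ℝ) :=
  {F | IsProbabilityMeasure F ∧ F (Icc (0 : ℝ) vbar) = 1 ∧ μ ≤ ∫ t, t ∂F}

/-- Competitive ratio of the deterministic posted price `v1` over the mean ambiguity set. -/
def postCR (μ vbar v1 : ℝ) : ℝ :=
  ⨅ F : ↥(Fmean μ vbar), v1 * (F.1 (Icc v1 vbar)).toReal / hindsightOpt vbar F.1

section HindsightOpt

variable {vbar : ℝ} {F : Measure ℝ} [IsProbabilityMeasure F]

lemma bddAbove_revenue :
    BddAbove (range fun p : Icc (0 : ℝ) vbar => (p : ℝ) * (F (Icc (p : ℝ) vbar)).toReal) := by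
  refine ⟨vbar, ?_⟩
  rintro _ ⟨⟨p, hp0, hpv⟩, rfl⟩
  calc p * (F (Icc p vbar)).toReal ≤ p * 1 := by gcongr; exact measureReal_le_one
    _ ≤ vbar := by linarith

lemma le_hindsightOpt {p : ℝ} (hp : p ∈ Icc 0 vbar) :
    p * (F (Icc p vbar)).toReal ≤ hindsightOpt vbar F :=
  le_ciSup bddAbove_revenue (⟨p, hp⟩ : Icc (0 : ℝ) vbar)

lemma hindsightOpt_nonneg (hv : 0 ≤ vbar) : 0 ≤ hindsightOpt vbar F := by
  simpa using le_hindsightOpt (F := F) (p := 0) ⟨le_rfl, hv⟩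

lemma hindsightOpt_le_max {c : ℝ} (hv : 0 ≤ vbar) :
    hindsightOpt vbar F ≤ max c (vbar * (F (Icc c vbar)).toReal) := by
  have : Nonempty (Icc (0 : ℝ) vbar) := ⟨⟨0, le_rfl, hv⟩⟩
  refine ciSup_le fun ⟨p, hp0, hpv⟩ => ?_
  rcases le_or_gt p c with hpc | hcp
  · refine le_max_of_le_left ?_
    calc p * (F (Icc p vbar)).toReal ≤ p * 1 := by gcongr; exact measureReal_le_one
      _ ≤ c := by linarith
  · refine le_max_of_le_right ?_
    exact mul_le_mul hpv (measureReal_mono (μ := F) (Icc_subset_Icc_left hcp.le))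
      ENNReal.toReal_nonneg hv

end HindsightOpt

lemma integral_id_le_of_measure_Icc_eq_one {vbar : ℝ} {F : Measure ℝ} [IsProbabilityMeasure F]
    (hF : F (Icc 0 vbar) = 1) (p : ℝ) :
    ∫ t, t ∂F ≤ p + (vbar - p) * (F (Icc p vbar)).toReal := by
  have hae : ∀ᵐ t ∂F, t ∈ Icc 0 vbar := by
    rw [ae_mem_iff_measure_eq measurableSet_Icc.nullMeasurableSet, hF, measure_univ]
  have hid : Integrable (fun t : ℝ => t) F := by
    refine Integrable.mono' (integrable_const vbar) aestronglyMeasurable_id ?_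
    filter_upwards [hae] with t ht
    rw [Real.norm_eq_abs, abs_le]
    constructor <;> linarith [ht.1, ht.2]
  have hind : Integrable ((Icc p vbar).indicator fun _ => vbar - p) F :=
    (integrable_const _).indicator measurableSet_Icc
  have hle : ∀ᵐ t ∂F, t ≤ p + (Icc p vbar).indicator (fun _ => vbar - p) t := by
    filter_upwards [hae] with t ht
    by_cases hpt : p ≤ t
    · rw [indicator_of_mem (show t ∈ Icc p vbar from ⟨hpt, ht.2⟩)]
      linarith [ht.2]
    · rw [indicator_of_notMem fun h => hpt h.1]
      linarith
  calc ∫ t, t ∂F ≤ ∫ t, (p + (Icc p vbar).indicator (fun _ => vbar - p) t) ∂F :=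
        integral_mono_ae hid ((integrable_const p).add hind) hle
    _ = p + (vbar - p) * (F (Icc p vbar)).toReal := by
        rw [integral_add (integrable_const p) hind, integral_const,
          integral_indicator_const _ measurableSet_Icc]
        simp [measureReal_def, mul_comm]

def twoPoint (a b q : ℝ) : Measure ℝ :=
  ENNReal.ofReal (1 - q) • Measure.dirac a + ENNReal.ofReal q • Measure.dirac b

section TwoPoint

variable {a b q : ℝ} {s : Set ℝ}

lemma twoPoint_apply_of_mem (hq0 : 0 ≤ q) (hq1 : q ≤ 1) (ha : a ∈ s) (hb : b ∈ s) :
    twoPoint a b q s = 1 := by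
  rw [twoPoint, Measure.add_apply, Measure.smul_apply, Measure.smul_apply,
    Measure.dirac_apply_of_mem ha, Measure.dirac_apply_of_mem hb, smul_eq_mul, smul_eq_mul,
    mul_one, mul_one, ← ENNReal.ofReal_add (by linarith) hq0]
  norm_num

lemma twoPoint_apply_of_notMem (hs : MeasurableSet s) (ha : a ∉ s) (hb : b ∈ s) :
    twoPoint a b q s = ENNReal.ofReal q := by
  simp [twoPoint, Measure.dirac_apply' _ hs, ha, hb]

lemma isProbabilityMeasure_twoPoint (hq0 : 0 ≤ q) (hq1 : q ≤ 1) :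
    IsProbabilityMeasure (twoPoint a b q) :=
  ⟨twoPoint_apply_of_mem hq0 hq1 (mem_univ a) (mem_univ b)⟩

lemma integral_id_twoPoint (hq0 : 0 ≤ q) (hq1 : q ≤ 1) :
    ∫ t, t ∂(twoPoint a b q) = (1 - q) * a + q * b := by
  have hint (c : ℝ) : Integrable (fun t : ℝ => t) (Measure.dirac c) :=
    integrable_dirac enorm_lt_top
  rw [twoPoint, integral_add_measure ((hint a).smul_measure ENNReal.ofReal_ne_top)
      ((hint b).smul_measure ENNReal.ofReal_ne_top),
    integral_smul_measure, integral_smul_measure, integral_dirac, integral_dirac,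
    ENNReal.toReal_ofReal (by linarith), ENNReal.toReal_ofReal hq0, smul_eq_mul, smul_eq_mul]

end TwoPoint

section PostCR

variable {μ vbar v1 : ℝ}

lemma dirac_mem_Fmean (hμ : μ ∈ Icc 0 vbar) : Measure.dirac μ ∈ Fmean μ vbar :=
  ⟨inferInstance, Measure.dirac_apply_of_mem hμ, (integral_dirac (fun t => t) μ).ge⟩

lemma twoPoint_mem_Fmean {a : ℝ} (ha : 0 ≤ a) (haμ : a ≤ μ) (hμv : μ < vbar) :
    twoPoint a vbar ((μ - a) / (vbar - a)) ∈ Fmean μ vbar := by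
  have hva : 0 < vbar - a := by linarith
  have hq0 : 0 ≤ (μ - a) / (vbar - a) := div_nonneg (by linarith) hva.le
  have hq1 : (μ - a) / (vbar - a) ≤ 1 := (div_le_one hva).2 (by linarith)
  refine ⟨isProbabilityMeasure_twoPoint hq0 hq1,
    twoPoint_apply_of_mem hq0 hq1 ⟨ha, by linarith⟩ ⟨by linarith, le_rfl⟩, ?_⟩
  rw [integral_id_twoPoint hq0 hq1]
  field_simp
  nlinarith

lemma postCR_le {F : Measure ℝ} (hF : F ∈ Fmean μ vbar) (hv : 0 ≤ vbar) (hv1 : 0 ≤ v1) :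
    postCR μ vbar v1 ≤ v1 * (F (Icc v1 vbar)).toReal / hindsightOpt vbar F := by
  refine ciInf_le ⟨0, ?_⟩ (⟨F, hF⟩ : Fmean μ vbar)
  rintro _ ⟨⟨G, hG⟩, rfl⟩
  have := hG.1
  exact div_nonneg (mul_nonneg hv1 ENNReal.toReal_nonneg) (hindsightOpt_nonneg hv)

lemma postCR_le_twoPoint {a : ℝ} (hμ : 0 < μ) (ha : 0 ≤ a) (haμ : a ≤ μ) (hμv : μ < vbar)
    (hav1 : a < v1) (hv1 : v1 ≤ vbar) :
    postCR μ vbar v1 ≤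
      v1 * ((μ - a) / (vbar - a)) / max a (vbar * ((μ - a) / (vbar - a))) := by
  set q := (μ - a) / (vbar - a)
  have hva : 0 < vbar - a := by linarith
  have hq0 : 0 ≤ q := div_nonneg (by linarith) hva.le
  have hq1 : q ≤ 1 := (div_le_one hva).2 (by linarith)
  have := isProbabilityMeasure_twoPoint (a := a) (b := vbar) hq0 hq1
  have hsell : twoPoint a vbar q (Icc v1 vbar) = ENNReal.ofReal q :=
    twoPoint_apply_of_notMem measurableSet_Icc (fun h => hav1.not_ge h.1) ⟨hv1, le_rfl⟩
  have hav : a ≤ vbar := hav1.le.trans hv1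
  have hopt_a : a ≤ hindsightOpt vbar (twoPoint a vbar q) := by
    simpa [twoPoint_apply_of_mem hq0 hq1 (left_mem_Icc.2 hav) (right_mem_Icc.2 hav)] using
      le_hindsightOpt (F := twoPoint a vbar q) ⟨ha, hav⟩
  have hopt_vbar : vbar * q ≤ hindsightOpt vbar (twoPoint a vbar q) := by
    have := le_hindsightOpt (F := twoPoint a vbar q) ⟨ha.trans hav, le_rfl⟩
    rwa [twoPoint_apply_of_notMem measurableSet_Icc (fun h => (hav1.trans_le hv1).not_ge h.1)
      ⟨le_rfl, le_rfl⟩, ENNReal.toReal_ofReal hq0] at this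
  have hmax : 0 < max a (vbar * q) := by
    rcases ha.eq_or_lt with rfl | ha
    · exact lt_max_of_lt_right (mul_pos (by linarith) (div_pos (by linarith) hva))
    · exact lt_max_of_lt_left ha
  calc postCR μ vbar v1 ≤ v1 * (twoPoint a vbar q (Icc v1 vbar)).toReal /
        hindsightOpt vbar (twoPoint a vbar q) :=
        postCR_le (twoPoint_mem_Fmean ha haμ hμv) (ha.trans hav) (ha.trans hav1.le)
    _ ≤ v1 * q / max a (vbar * q) := by
        rw [hsell, ENNReal.toReal_ofReal hq0]
        exact div_le_div_of_nonneg_left (mul_nonneg (ha.trans hav1.le) hq0) hmax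
          (max_le hopt_a hopt_vbar)

lemma postCR_le_div_vbar (hμ : 0 < μ) (hμv : μ < vbar) (hv1 : v1 ∈ Icc 0 vbar) :
    postCR μ vbar v1 ≤ v1 / vbar := by
  have hv : 0 < vbar := hμ.trans hμv
  rcases hv1.1.eq_or_lt with rfl | hv1pos
  · simpa using postCR_le (twoPoint_mem_Fmean le_rfl hμ.le hμv) hv.le le_rfl
  · have := postCR_le_twoPoint hμ le_rfl hμ.le hμv hv1pos hv1.2
    rwa [sub_zero, sub_zero, max_eq_right (by positivity),
      mul_div_mul_right _ _ (div_pos hμ hv).ne'] at this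

/-- The worst case moves an atom up to just below the price `v1`, where it is not sold. -/
lemma postCR_le_of_le_mean (hv1 : 0 < v1) (hv1μ : v1 ≤ μ) (hμv : μ < vbar) :
    postCR μ vbar v1 ≤ (μ - v1) / (vbar - v1) := by
  let g : ℝ → ℝ := fun a => v1 * ((μ - a) / (vbar - a)) / a
  have hg : ∀ a ∈ Ioo 0 v1, postCR μ vbar v1 ≤ g a := fun a ha =>
    (postCR_le_twoPoint (hv1.trans_le hv1μ) ha.1.le (ha.2.le.trans hv1μ) hμv ha.2
      (by linarith)).trans
      (div_le_div_of_nonneg_left (mul_nonneg hv1.le (div_nonneg (by linarith [ha.2])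
        (by linarith [ha.2]))) ha.1 (le_max_left _ _))
  have hlim : Filter.Tendsto g (nhdsWithin v1 (Iio v1)) (nhds (g v1)) := by
    refine ContinuousAt.tendsto ?_ |>.mono_left nhdsWithin_le_nhds
    have : vbar - v1 ≠ 0 := by linarith
    have := hv1.ne'
    fun_prop (disch := assumption)
  have hgv1 : g v1 = (μ - v1) / (vbar - v1) := by
    simp only [g]
    field_simp
  rw [← hgv1]
  exact ge_of_tendsto hlim (Filter.eventually_of_mem (Ioo_mem_nhdsLT hv1) hg)

lemma postCR_nonpos_of_mean_lt (hμ : 0 ≤ μ) (hμv1 : μ < v1) (hμv : μ ≤ vbar) :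
    postCR μ vbar v1 ≤ 0 := by
  have hsell : Measure.dirac μ (Icc v1 vbar) = 0 := by
    simp [Measure.dirac_apply' _ measurableSet_Icc, hμv1.not_ge]
  simpa [hsell] using postCR_le (dirac_mem_Fmean ⟨hμ, hμv⟩) (hμ.trans hμv) (hμ.trans hμv1.le)

/-- A mean of at least `μ` forces `F [c, v̄] ≥ (μ - c) / (v̄ - c)`, while the optimum is at most
`max c (v̄ F [c, v̄])`. -/
lemma min_le_postCR {c : ℝ} (hc : 0 < c) (hcμ : c < μ) (hμv : μ ≤ vbar) :
    min ((μ - c) / (vbar - c)) (c / vbar) ≤ postCR μ vbar c := by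
  have hvc : 0 < vbar - c := by linarith
  have hv : 0 < vbar := by linarith
  have : Nonempty (Fmean μ vbar) := ⟨⟨_, dirac_mem_Fmean ⟨hc.le.trans hcμ.le, hμv⟩⟩⟩
  refine le_ciInf fun ⟨F, hP, hsupp, hmean⟩ => ?_
  set q := (F (Icc c vbar)).toReal
  have hq : (μ - c) / (vbar - c) ≤ q := by
    rw [div_le_iff₀ hvc]
    linarith [hmean.trans (integral_id_le_of_measure_Icc_eq_one hsupp c)]
  have hqpos : 0 < q := (div_pos (by linarith) hvc).trans_le hq
  have hopt : c * q ≤ hindsightOpt vbar F := le_hindsightOpt ⟨hc.le, by linarith⟩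
  have hm : 0 ≤ min ((μ - c) / (vbar - c)) (c / vbar) :=
    le_min (div_pos (by linarith) hvc).le (by positivity)
  show _ ≤ c * q / hindsightOpt vbar F
  rw [le_div_iff₀ ((mul_pos hc hqpos).trans_le hopt)]
  calc min ((μ - c) / (vbar - c)) (c / vbar) * hindsightOpt vbar F
      ≤ min ((μ - c) / (vbar - c)) (c / vbar) * max c (vbar * q) :=
        mul_le_mul_of_nonneg_left (hindsightOpt_le_max hv.le) hm
    _ ≤ c * q := by
        rcases max_choice c (vbar * q) with h | h <;> rw [h]
        · nlinarith [min_le_left ((μ - c) / (vbar - c)) (c / vbar)]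
        · calc min ((μ - c) / (vbar - c)) (c / vbar) * (vbar * q) ≤ c / vbar * (vbar * q) := by
                gcongr
                exact min_le_right _ _
            _ = c * q := by field_simp

end PostCR

lemma sub_sqrt_sq_sub_mul_eq {μ vbar : ℝ} (hv : 0 < vbar) :
    vbar - Real.sqrt (vbar ^ 2 - μ * vbar) = (1 - Real.sqrt (1 - μ / vbar)) * vbar := by
  have : vbar ^ 2 - μ * vbar = (1 - μ / vbar) * vbar ^ 2 := by field_simp
  rw [this, Real.sqrt_mul' _ (sq_nonneg _), Real.sqrt_sq hv.le]
  ring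

/-- The optimal posted price under the mean ambiguity set is `v₁ = v̄ - √(v̄² - μv̄)`, achieving
the optimal competitive ratio `𝓡₁ = 1 - √(1 - μ/v̄)`. -/
theorem stmt5 (μ vbar : ℝ) (hμ : 0 < μ) (hμv : μ < vbar) :
    postCR μ vbar (vbar - Real.sqrt (vbar ^ 2 - μ * vbar)) = 1 - Real.sqrt (1 - μ / vbar) ∧
    ∀ v1 ∈ Icc (0 : ℝ) vbar, postCR μ vbar v1 ≤ 1 - Real.sqrt (1 - μ / vbar) := by
  have hv : 0 < vbar := hμ.trans hμv
  rw [sub_sqrt_sq_sub_mul_eq hv]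
  -- with `s = √(1 - μ/v̄)` the price is `(1 - s) v̄` and `μ = (1 - s²) v̄`
  set s := Real.sqrt (1 - μ / vbar)
  have hratio : μ / vbar < 1 := (div_lt_one hv).2 hμv
  have hs2 : s ^ 2 = 1 - μ / vbar := Real.sq_sqrt (by linarith)
  have hs0 : 0 < s := Real.sqrt_pos.2 (by linarith)
  have hs1 : s < 1 := by nlinarith [div_pos hμ hv]
  have hμs : μ = (1 - s ^ 2) * vbar := by rw [hs2]; field_simp; ring
  have hprice_lt : (1 - s) * vbar < μ := by rw [hμs]; nlinarith
  refine ⟨le_antisymm ?_ ?_, fun v1 hv1 => ?_⟩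
  · refine (postCR_le_div_vbar hμ hμv ⟨by nlinarith, by nlinarith⟩).trans_eq ?_
    field_simp
  · have hleft : (μ - (1 - s) * vbar) / (vbar - (1 - s) * vbar) = 1 - s := by
      rw [hμs, show (1 - s ^ 2) * vbar - (1 - s) * vbar = (1 - s) * (vbar - (1 - s) * vbar) by
        ring]
      exact mul_div_cancel_right₀ _ (by nlinarith)
    have hright : (1 - s) * vbar / vbar = 1 - s := by field_simp
    simpa [hleft, hright] using min_le_postCR (by nlinarith) hprice_lt hμv.le
  · rcases le_or_gt v1 ((1 - s) * vbar) with hlow | hmid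
    · refine (postCR_le_div_vbar hμ hμv hv1).trans ?_
      rw [div_le_iff₀ hv]
      exact hlow
    rcases le_or_gt v1 μ with hle | hhigh
    · refine (postCR_le_of_le_mean (by nlinarith) hle hμv).trans ?_
      rw [div_le_iff₀ (by linarith)]
      nlinarith
    · exact (postCR_nonpos_of_mean_lt hμ.le hhigh hμv.le).trans (by linarith)
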